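/- arXiv:1008.4685 — 2 statements merged into one kernel-verified Lean document; each statement's English description precedes it below -/
import Mathlib

section
/- Let C be a type, comp a composition rule satisfying (C2) and (C3) with neutral element e, d a decomposition rule satisfying (D2) and (D3) with the same element e as void object, assume (CD1), and assume the size-compatibility condition (CD2): there is sz : C → ℕ with sz Γ = sz Γ₂ + sz Γ₁ whenever Γ ∈ comp Γ₂ Γ₁, with sz Γ'' + sz Γ' = sz Γ whenever (Γ'', Γ') ∈ d Γ, and with sz Γ = 0 ↔ Γ = e. Let K be a commutative ring. Then: (i) there exists a K-linear antipode S : (C →₀ K) →ₗ[K] (C →₀ K) satisfying, for every Γ, ((d Γ).map (fun p => mul (S (Finsupp.single p.1 1)) (Finsupp.single p.2 1))).sum = (if Γ = e then Finsupp.single e 1 else 0) and the symmetric identity with S applied to the second components; and (ii) the Hopf algebra is graded by size: for Γ₂ with sz Γ₂ = i and Γ₁ with sz Γ₁ = j, the product mul (Finsupp.single Γ₂ 1) (Finsupp.single Γ₁ 1) is supported on elements Γ with sz Γ = i + j, and for Γ with sz Γ = k every pair (Γ'', Γ') ∈ d Γ satisfies sz Γ'' + sz Γ' = k. (Proposition 4,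 Grading.) -/
/-!
Convolution `(f ⋆ g) Γ = ∑_{(Γ'', Γ') ∈ d Γ} f Γ'' · g Γ'` of maps `C → C →₀ K` is associative
by (C2) and (D2), and by (D3) its unit is `Γ ↦ [Γ = e] e`. An antipode is a two-sided
`⋆`-inverse of `Γ ↦ Γ`. Since decompositions split the size and only `e` has size `0`, the only
pair of `d Γ` whose first component has the full size of `Γ` is `(Γ, e)`; so `S ⋆ id = unit`
can be solved for `S Γ` by recursion on the size, and symmetrically `id ⋆ T = unit` for `T`.
Associativity then forces `S = T`.
-/

/-- The induced multiplication on the free module `C →₀ K`. -/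
noncomputable def mulF {C : Type*} (K : Type*) [CommRing K]
    (comp : C → C → Multiset C) : (C →₀ K) →ₗ[K] (C →₀ K) →ₗ[K] (C →₀ K) :=
  Finsupp.lift ((C →₀ K) →ₗ[K] (C →₀ K)) K C fun Γ₂ =>
    Finsupp.lift (C →₀ K) K C fun Γ₁ =>
      ((comp Γ₂ Γ₁).map fun Γ => Finsupp.single Γ (1 : K)).sum

open Finsupp

theorem Multiset.filter_eq_singleton {α : Type*} [DecidableEq α] {s : Multiset α} {P : α → Prop}
    [DecidablePred P] {a : α} (hP : ∀ x ∈ s, P x ↔ x = a) (ha : s.count a = 1) :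
    s.filter P = {a} := by
  rw [Multiset.filter_congr hP, Multiset.filter_eq', ha, Multiset.replicate_one]

section Multiplication

variable {C : Type*} {K : Type*} [CommRing K] {comp : C → C → Multiset C}

theorem mulF_single_single (a b : C) :
    mulF K comp (single a 1) (single b 1) = ((comp a b).map fun c => single c (1 : K)).sum := by
  simp [mulF]

theorem mulF_multiset_sum_left (s : Multiset (C →₀ K)) (y : C →₀ K) :
    mulF K comp s.sum y = (s.map fun x => mulF K comp x y).sum :=
  map_multiset_sum ((mulF K comp).flip y) s

theorem mulF_multiset_sum_right (x : C →₀ K) (s : Multiset (C →₀ K)) :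
    mulF K comp x s.sum = (s.map fun y => mulF K comp x y).sum :=
  map_multiset_sum (mulF K comp x) s

theorem mulF_single_one_left {e : C} (hC3l : ∀ Γ, comp e Γ = {Γ}) (x : C →₀ K) :
    mulF K comp (single e 1) x = x := by
  suffices mulF K comp (single e 1) = LinearMap.id from LinearMap.congr_fun this x
  ext Γ
  simp [mulF_single_single, hC3l]

theorem mulF_single_one_right {e : C} (hC3r : ∀ Γ, comp Γ e = {Γ}) (x : C →₀ K) :
    mulF K comp x (single e 1) = x := by
  suffices (mulF K comp).flip (single e 1) = LinearMap.id from LinearMap.congr_fun this x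
  ext Γ
  simp [mulF_single_single, hC3r]

theorem mulF_assoc
    (hC2 : ∀ Γ₃ Γ₂ Γ₁ : C,
      (comp Γ₂ Γ₁).bind (fun x => comp Γ₃ x) = (comp Γ₃ Γ₂).bind (fun x => comp x Γ₁))
    (x y z : C →₀ K) :
    mulF K comp (mulF K comp x y) z = mulF K comp x (mulF K comp y z) := by
  suffices (mulF K comp).compr₂ (mulF K comp) =
      (LinearMap.llcomp K _ _ _ ∘ₗ mulF K comp).compl₂ (mulF K comp) from
    LinearMap.congr_fun (LinearMap.congr_fun₂ this x y) z
  ext a b c : 6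
  simp only [LinearMap.coe_comp, Function.comp_apply, lsingle_apply, LinearMap.compr₂_apply,
    LinearMap.compl₂_apply, LinearMap.llcomp_apply, mulF_single_single, mulF_multiset_sum_left,
    mulF_multiset_sum_right, Multiset.map_map]
  simpa only [Multiset.map_bind, Multiset.sum_bind] using
    congrArg (fun s => (s.map fun c => single c (1 : K)).sum) (hC2 a b c).symm

theorem mem_comp_of_mem_support_mulF_single_single {a b c : C}
    (hc : c ∈ (mulF K comp (single a 1) (single b 1)).support) : c ∈ comp a b := by
  rw [mulF_single_single] at hc
  obtain ⟨f, hf, hcf⟩ := mem_support_multiset_sum c hc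
  obtain ⟨x, hx, rfl⟩ := Multiset.mem_map.mp hf
  rwa [Finset.mem_singleton.mp (support_single_subset hcf)]

end Multiplication

section Decomposition

variable {C : Type*} {d : C → Multiset (C × C)} {e : C}

theorem size_fst_lt_iff {sz : C → ℕ} (hszd : ∀ Γ : C, ∀ p ∈ d Γ, sz p.1 + sz p.2 = sz Γ)
    (hze : ∀ Γ : C, sz Γ = 0 ↔ Γ = e) {Γ : C} {p : C × C} (hp : p ∈ d Γ) :
    sz p.1 < sz Γ ↔ p.2 ≠ e := by
  rw [← hszd Γ p hp, Ne, ← hze]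
  omega

theorem size_snd_lt_iff {sz : C → ℕ} (hszd : ∀ Γ : C, ∀ p ∈ d Γ, sz p.1 + sz p.2 = sz Γ)
    (hze : ∀ Γ : C, sz Γ = 0 ↔ Γ = e) {Γ : C} {p : C × C} (hp : p ∈ d Γ) :
    sz p.2 < sz Γ ↔ p.1 ≠ e := by
  rw [← hszd Γ p hp, Ne, ← hze]
  omega

variable [DecidableEq C]

theorem filter_fst_eq_void (hD3a : d e = {(e, e)})
    (hD3b : ∀ Γ : C, Γ ≠ e → (d Γ).count (e, Γ) = 1)
    (hfst : ∀ Γ : C, Γ ≠ e → ∀ p ∈ d Γ, p.1 = e → p = (e, Γ)) (Γ : C) :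
    (d Γ).filter (fun p => p.1 = e) = {(e, Γ)} := by
  by_cases hΓ : Γ = e
  · subst hΓ
    simp [hD3a]
  · refine Multiset.filter_eq_singleton (fun p hp => ⟨hfst Γ hΓ p hp, ?_⟩) (hD3b Γ hΓ)
    rintro rfl
    rfl

theorem filter_snd_eq_void (hD3a : d e = {(e, e)})
    (hD3c : ∀ Γ : C, Γ ≠ e → (d Γ).count (Γ, e) = 1)
    (hsnd : ∀ Γ : C, Γ ≠ e → ∀ p ∈ d Γ, p.2 = e → p = (Γ, e)) (Γ : C) :
    (d Γ).filter (fun p => p.2 = e) = {(Γ, e)} := by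
  by_cases hΓ : Γ = e
  · subst hΓ
    simp [hD3a]
  · refine Multiset.filter_eq_singleton (fun p hp => ⟨hsnd Γ hΓ p hp, ?_⟩) (hD3c Γ hΓ)
    rintro rfl
    rfl

end Decomposition

section Convolution

variable {C : Type*} (K : Type*) [CommRing K] (comp : C → C → Multiset C)
  (d : C → Multiset (C × C))

noncomputable def conv (f g : C → C →₀ K) : C → C →₀ K :=
  fun Γ => ((d Γ).map fun p => mulF K comp (f p.1) (g p.2)).sum

variable {K comp d}

theorem conv_assoc
    (hC2 : ∀ Γ₃ Γ₂ Γ₁ : C,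
      (comp Γ₂ Γ₁).bind (fun x => comp Γ₃ x) = (comp Γ₃ Γ₂).bind (fun x => comp x Γ₁))
    (hD2 : ∀ Γ : C,
      (d Γ).bind (fun p => (d p.2).map (fun q => (p.1, q.1, q.2))) =
      (d Γ).bind (fun p => (d p.1).map (fun q => (q.1, q.2, p.2))))
    (f g h : C → C →₀ K) :
    conv K comp d (conv K comp d f g) h = conv K comp d f (conv K comp d g h) := by
  funext Γ
  have key := congrArg
    (fun s => (s.map fun t => mulF K comp (mulF K comp (f t.1) (g t.2.1)) (h t.2.2)).sum) (hD2 Γ)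
  simp only [Multiset.map_bind, Multiset.sum_bind, Multiset.map_map, Function.comp_def,
    mulF_assoc hC2] at key
  simp only [conv, mulF_multiset_sum_left, mulF_multiset_sum_right, Multiset.map_map,
    Function.comp_def, mulF_assoc hC2]
  exact key.symm

variable [DecidableEq C]

variable (K) in
noncomputable def convUnit (e : C) : C → C →₀ K :=
  fun Γ => if Γ = e then single e 1 else 0

variable {e : C}

theorem convUnit_conv (hC3l : ∀ Γ : C, comp e Γ = {Γ})
    (hd : ∀ Γ : C, (d Γ).filter (fun p => p.1 = e) = {(e, Γ)}) (f : C → C →₀ K) :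
    conv K comp d (convUnit K e) f = f := by
  funext Γ
  have hvanish : (((d Γ).filter fun p => ¬p.1 = e).map
      fun p => mulF K comp (convUnit K e p.1) (f p.2)).sum = 0 :=
    Multiset.sum_eq_zero fun x hx => by
      obtain ⟨p, hp, rfl⟩ := Multiset.mem_map.mp hx
      simp [convUnit, (Multiset.mem_filter.mp hp).2]
  rw [conv, ← Multiset.filter_add_not (fun p => p.1 = e) (d Γ), Multiset.map_add,
    Multiset.sum_add, hvanish, hd]
  simp [convUnit, mulF_single_one_left hC3l]

theorem conv_convUnit (hC3r : ∀ Γ : C, comp Γ e = {Γ})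
    (hd : ∀ Γ : C, (d Γ).filter (fun p => p.2 = e) = {(Γ, e)}) (f : C → C →₀ K) :
    conv K comp d f (convUnit K e) = f := by
  funext Γ
  have hvanish : (((d Γ).filter fun p => ¬p.2 = e).map
      fun p => mulF K comp (f p.1) (convUnit K e p.2)).sum = 0 :=
    Multiset.sum_eq_zero fun x hx => by
      obtain ⟨p, hp, rfl⟩ := Multiset.mem_map.mp hx
      simp [convUnit, (Multiset.mem_filter.mp hp).2]
  rw [conv, ← Multiset.filter_add_not (fun p => p.2 = e) (d Γ), Multiset.map_add,
    Multiset.sum_add, hvanish, hd]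
  simp [convUnit, mulF_single_one_right hC3r]

end Convolution

section Antipode

variable {C : Type*} (K : Type*) [CommRing K] [DecidableEq C] (comp : C → C → Multiset C)
  (e : C) (d : C → Multiset (C × C)) (sz : C → ℕ)

/- The filter makes the recursion well founded for any `sz`; under (D3) and (CD2) it drops exactly
the pair `(Γ, e)`, whose term is `leftAntipode Γ` itself. -/
noncomputable def leftAntipode (Γ : C) : C →₀ K :=
  convUnit K e Γ - (((d Γ).filter fun p => sz p.1 < sz Γ).attach.map
    fun p => mulF K comp (leftAntipode p.1.1) (single p.1.2 1)).sum
termination_by sz Γ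
decreasing_by exact (Multiset.mem_filter.mp p.2).2

noncomputable def rightAntipode (Γ : C) : C →₀ K :=
  convUnit K e Γ - (((d Γ).filter fun p => sz p.2 < sz Γ).attach.map
    fun p => mulF K comp (single p.1.1 1) (rightAntipode p.1.2)).sum
termination_by sz Γ
decreasing_by exact (Multiset.mem_filter.mp p.2).2

theorem leftAntipode_eq (Γ : C) :
    leftAntipode K comp e d sz Γ = convUnit K e Γ - (((d Γ).filter fun p => sz p.1 < sz Γ).map
      fun p => mulF K comp (leftAntipode K comp e d sz p.1) (single p.2 1)).sum := by
  rw [leftAntipode, Multiset.attach_map_val' _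
    fun p : C × C => mulF K comp (leftAntipode K comp e d sz p.1) (single p.2 1)]

theorem rightAntipode_eq (Γ : C) :
    rightAntipode K comp e d sz Γ = convUnit K e Γ - (((d Γ).filter fun p => sz p.2 < sz Γ).map
      fun p => mulF K comp (single p.1 1) (rightAntipode K comp e d sz p.2)).sum := by
  rw [rightAntipode, Multiset.attach_map_val' _
    fun p : C × C => mulF K comp (single p.1 1) (rightAntipode K comp e d sz p.2)]

variable {K comp e d sz}

theorem conv_leftAntipode (hC3r : ∀ Γ : C, comp Γ e = {Γ})
    (hd : ∀ Γ : C, (d Γ).filter (fun p => p.2 = e) = {(Γ, e)})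
    (hszd : ∀ Γ : C, ∀ p ∈ d Γ, sz p.1 + sz p.2 = sz Γ) (hze : ∀ Γ : C, sz Γ = 0 ↔ Γ = e) :
    conv K comp d (leftAntipode K comp e d sz) (fun Γ => single Γ 1) = convUnit K e := by
  funext Γ
  have hmax : (d Γ).filter (fun p => ¬sz p.1 < sz Γ) = {(Γ, e)} := by
    rw [← hd Γ]
    exact Multiset.filter_congr fun p hp => by rw [size_fst_lt_iff hszd hze hp, not_not]
  rw [conv, ← Multiset.filter_add_not (fun p => sz p.1 < sz Γ) (d Γ), Multiset.map_add,
    Multiset.sum_add, hmax, Multiset.map_singleton, Multiset.sum_singleton,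
    mulF_single_one_right hC3r, leftAntipode_eq K comp e d sz Γ, add_sub_cancel]

theorem conv_rightAntipode (hC3l : ∀ Γ : C, comp e Γ = {Γ})
    (hd : ∀ Γ : C, (d Γ).filter (fun p => p.1 = e) = {(e, Γ)})
    (hszd : ∀ Γ : C, ∀ p ∈ d Γ, sz p.1 + sz p.2 = sz Γ) (hze : ∀ Γ : C, sz Γ = 0 ↔ Γ = e) :
    conv K comp d (fun Γ => single Γ 1) (rightAntipode K comp e d sz) = convUnit K e := by
  funext Γ
  have hmax : (d Γ).filter (fun p => ¬sz p.2 < sz Γ) = {(e, Γ)} := by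
    rw [← hd Γ]
    exact Multiset.filter_congr fun p hp => by rw [size_snd_lt_iff hszd hze hp, not_not]
  rw [conv, ← Multiset.filter_add_not (fun p => sz p.2 < sz Γ) (d Γ), Multiset.map_add,
    Multiset.sum_add, hmax, Multiset.map_singleton, Multiset.sum_singleton,
    mulF_single_one_left hC3l, rightAntipode_eq K comp e d sz Γ, add_sub_cancel]

end Antipode

theorem stmt11_general {C : Type*} (K : Type*) [CommRing K] [DecidableEq C]
    (comp : C → C → Multiset C)
    (hC2 : ∀ Γ₃ Γ₂ Γ₁ : C,
      (comp Γ₂ Γ₁).bind (fun x => comp Γ₃ x) = (comp Γ₃ Γ₂).bind (fun x => comp x Γ₁))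
    (e : C)
    (hC3l : ∀ Γ : C, comp e Γ = {Γ})
    (hC3r : ∀ Γ : C, comp Γ e = {Γ})
    (d : C → Multiset (C × C))
    (hD2 : ∀ Γ : C,
      (d Γ).bind (fun p => (d p.2).map (fun q => (p.1, q.1, q.2))) =
      (d Γ).bind (fun p => (d p.1).map (fun q => (q.1, q.2, p.2))))
    (hD3a : d e = {(e, e)})
    (hD3b : ∀ Γ : C, Γ ≠ e → (d Γ).count (e, Γ) = 1)
    (hD3c : ∀ Γ : C, Γ ≠ e → (d Γ).count (Γ, e) = 1)
    (hD3d : ∀ Γ : C, Γ ≠ e → ∀ p ∈ d Γ,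
      (p.1 = e → p = (e, Γ)) ∧ (p.2 = e → p = (Γ, e)))
    (sz : C → ℕ)
    (hszc : ∀ Γ₂ Γ₁ : C, ∀ Γ ∈ comp Γ₂ Γ₁, sz Γ = sz Γ₂ + sz Γ₁)
    (hszd : ∀ Γ : C, ∀ p ∈ d Γ, sz p.1 + sz p.2 = sz Γ)
    (hze : ∀ Γ : C, sz Γ = 0 ↔ Γ = e) :
    (∃ S : (C →₀ K) →ₗ[K] (C →₀ K),
      ∀ Γ : C,
        ((d Γ).map fun p =>
            mulF K comp (S (Finsupp.single p.1 1)) (Finsupp.single p.2 1)).sum =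
          (if Γ = e then Finsupp.single e (1 : K) else 0) ∧
        ((d Γ).map fun p =>
            mulF K comp (Finsupp.single p.1 1) (S (Finsupp.single p.2 1))).sum =
          (if Γ = e then Finsupp.single e (1 : K) else 0)) ∧
    (∀ Γ₂ Γ₁ Γ : C,
      Γ ∈ (mulF K comp (Finsupp.single Γ₂ 1) (Finsupp.single Γ₁ 1)).support →
        sz Γ = sz Γ₂ + sz Γ₁) ∧
    (∀ Γ : C, ∀ p ∈ d Γ, sz p.1 + sz p.2 = sz Γ) := by
  refine ⟨?_, fun Γ₂ Γ₁ Γ hΓ => hszc Γ₂ Γ₁ Γ (mem_comp_of_mem_support_mulF_single_single hΓ),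
    hszd⟩
  have hd₁ := filter_fst_eq_void hD3a hD3b fun Γ hΓ p hp => (hD3d Γ hΓ p hp).1
  have hd₂ := filter_snd_eq_void hD3a hD3c fun Γ hΓ p hp => (hD3d Γ hΓ p hp).2
  set S := leftAntipode K comp e d sz
  set T := rightAntipode K comp e d sz
  have hS : conv K comp d S (fun Γ => single Γ 1) = convUnit K e :=
    conv_leftAntipode hC3r hd₂ hszd hze
  have hT : conv K comp d (fun Γ => single Γ 1) T = convUnit K e :=
    conv_rightAntipode hC3l hd₁ hszd hze
  have hST : S = T := calc
    S = conv K comp d S (conv K comp d (fun Γ => single Γ 1) T) := by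
      rw [hT, conv_convUnit hC3r hd₂]
    _ = conv K comp d (conv K comp d S (fun Γ => single Γ 1)) T := (conv_assoc hC2 hD2 _ _ _).symm
    _ = T := by rw [hS, convUnit_conv hC3l hd₁]
  refine ⟨linearCombination K S, fun Γ => ⟨?_, ?_⟩⟩
  · simpa [conv, convUnit] using congrFun hS Γ
  · simpa [conv, convUnit, hST] using congrFun hT Γ

/-- Proposition 4 (Grading): under (C2), (C3), (D2), (D3), (CD1) and the
size-compatibility condition (CD2), the Hopf algebra structure exists (there is an
antipode) and is graded by size: the product of basis elements of sizes `i` and `j`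
is supported in size `i + j`, and decompositions split the size. -/
theorem stmt11 {C : Type*} (K : Type*) [CommRing K] [DecidableEq C]
    (comp : C → C → Multiset C)
    (hC2 : ∀ Γ₃ Γ₂ Γ₁ : C,
      (comp Γ₂ Γ₁).bind (fun x => comp Γ₃ x) = (comp Γ₃ Γ₂).bind (fun x => comp x Γ₁))
    (e : C)
    (hC3l : ∀ Γ : C, comp e Γ = {Γ})
    (hC3r : ∀ Γ : C, comp Γ e = {Γ})
    (d : C → Multiset (C × C))
    (hD2 : ∀ Γ : C,
      (d Γ).bind (fun p => (d p.2).map (fun q => (p.1, q.1, q.2))) =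
      (d Γ).bind (fun p => (d p.1).map (fun q => (q.1, q.2, p.2))))
    (hD3a : d e = {(e, e)})
    (hD3b : ∀ Γ : C, Γ ≠ e → (d Γ).count (e, Γ) = 1)
    (hD3c : ∀ Γ : C, Γ ≠ e → (d Γ).count (Γ, e) = 1)
    (hD3d : ∀ Γ : C, Γ ≠ e → ∀ p ∈ d Γ,
      (p.1 = e → p = (e, Γ)) ∧ (p.2 = e → p = (Γ, e)))
    (hCD1 : ∀ Γ₂ Γ₁ : C,
      (comp Γ₂ Γ₁).bind d =
        (d Γ₂).bind (fun p₂ => (d Γ₁).bind (fun p₁ =>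
          (comp p₂.1 p₁.1).bind (fun a =>
            (comp p₂.2 p₁.2).map (fun b => (a, b))))))
    (sz : C → ℕ)
    (hszc : ∀ Γ₂ Γ₁ : C, ∀ Γ ∈ comp Γ₂ Γ₁, sz Γ = sz Γ₂ + sz Γ₁)
    (hszd : ∀ Γ : C, ∀ p ∈ d Γ, sz p.1 + sz p.2 = sz Γ)
    (hze : ∀ Γ : C, sz Γ = 0 ↔ Γ = e) :
    (∃ S : (C →₀ K) →ₗ[K] (C →₀ K),
      ∀ Γ : C,
        ((d Γ).map fun p =>
            mulF K comp (S (Finsupp.single p.1 1)) (Finsupp.single p.2 1)).sum =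
          (if Γ = e then Finsupp.single e (1 : K) else 0) ∧
        ((d Γ).map fun p =>
            mulF K comp (Finsupp.single p.1 1) (S (Finsupp.single p.2 1))).sum =
          (if Γ = e then Finsupp.single e (1 : K) else 0)) ∧
    (∀ Γ₂ Γ₁ Γ : C,
      Γ ∈ (mulF K comp (Finsupp.single Γ₂ 1) (Finsupp.single Γ₁ 1)).support →
        sz Γ = sz Γ₂ + sz Γ₁) ∧
    (∀ Γ : C, ∀ p ∈ d Γ, sz p.1 + sz p.2 = sz Γ) :=
  stmt11_general K comp hC2 e hC3l hC3r d hD2 hD3a hD3b hD3c hD3d sz hszc hszd hze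
end

section
/- Let A be a type. For all lists l₂ l₁ : List A, the deconcatenation decomposition is compatible with the shuffle composition: (shuffles l₂ l₁).bind cuts = (cuts l₂).bind (fun p₂ => (cuts l₁).bind (fun p₁ => (shuffles p₂.1 p₁.1).bind (fun s => (shuffles p₂.2 p₁.2).map (fun t => (s, t))))), an equality of multisets of pairs (multiplicities included). (Compatibility condition (CD1) for the shuffle Hopf algebra with deconcatenation coproduct, Section 5.1.3.) -/
/-- The multiset of all interleavings (shuffles) of two words, preserving the
relative order of the letters of each, counted according to the choice of
positions. -/
def shuffles {A : Type*} : List A → List A → Multiset (List A)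
  | [], l => {l}
  | a :: l, [] => {a :: l}
  | a :: l, b :: m =>
      ((shuffles l (b :: m)).map fun w => a :: w) +
      ((shuffles (a :: l) m).map fun w => b :: w)
termination_by u v => u.length + v.length

/-- The deconcatenation decomposition of a word: the multiset of pairs
`(suffix, prefix)` over all cut points `j = 0, 1, …, l.length`. -/
def cuts {A : Type*} (l : List A) : Multiset (List A × List A) :=
  (Multiset.range (l.length + 1)).map fun j => (l.drop j, l.take j)

/-!
Both sides satisfy the recursion of `shuffles`. A cut of a word `c :: w` either keeps the
whole word as suffix or is a cut of `w` with `c` prepended to the prefix. So a cut of a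
shuffle of `a :: l` and `b :: m` is the whole shuffle, or its prefix starts with `a` (resp.
`b`) followed by a cut of a shuffle of `l` and `b :: m` (resp. of `a :: l` and `m`). On the
right-hand side the same three cases appear on splitting the cuts of `a :: l` and of `b :: m`
this way and expanding the shuffle of the two prefixes by its first letter.
-/

namespace Multiset

variable {α β γ : Type*}

theorem product_map_right (s : Multiset α) (t : Multiset β) (f : β → γ) :
    s ×ˢ t.map f = (s ×ˢ t).map (Prod.map id f) := by
  simp [SProd.sprod, product, map_bind]

theorem product_singleton_right (s : Multiset α) (b : β) :
    s ×ˢ ({b} : Multiset β) = s.map (·, b) := by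
  simp [← cons_zero, product_cons]

end Multiset

open Multiset

section

variable {A : Type*}

@[simp] theorem shuffles_nil_left (l : List A) : shuffles [] l = {l} := by
  cases l <;> simp [shuffles]

@[simp] theorem shuffles_nil_right (l : List A) : shuffles l [] = {l} := by
  cases l <;> simp [shuffles]

theorem shuffles_cons_cons (a b : A) (l m : List A) :
    shuffles (a :: l) (b :: m) =
      (shuffles l (b :: m)).map (List.cons a) + (shuffles (a :: l) m).map (List.cons b) := by
  rw [shuffles]

@[simp] theorem cuts_nil : cuts ([] : List A) = {([], [])} := rfl

theorem cuts_cons (a : A) (l : List A) :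
    cuts (a :: l) = (a :: l, []) ::ₘ (cuts l).map (Prod.map id (List.cons a)) := by
  simp [cuts, Multiset.range, List.range_succ_eq_map, Function.comp_def]

theorem bind_cuts_map_cons (a : A) (S : Multiset (List A)) :
    (S.map (List.cons a)).bind cuts =
      S.map (fun w => (a :: w, [])) + (S.bind cuts).map (Prod.map id (List.cons a)) := by
  simp [bind_map, cuts_cons, map_bind]

theorem shuffles_bind_cuts_cons_cons (a b : A) (l m : List A) :
    (shuffles (a :: l) (b :: m)).bind cuts =
      (shuffles (a :: l) (b :: m)).map (·, []) +
        ((shuffles l (b :: m)).bind cuts).map (Prod.map id (List.cons a)) +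
        ((shuffles (a :: l) m).bind cuts).map (Prod.map id (List.cons b)) := by
  conv_lhs => rw [shuffles_cons_cons]
  rw [add_bind, bind_cuts_map_cons, bind_cuts_map_cons, shuffles_cons_cons, map_add]
  simp only [map_map, Function.comp_def]
  abel

def shuffleProd (p q : List A × List A) : Multiset (List A × List A) :=
  shuffles p.1 q.1 ×ˢ shuffles p.2 q.2

@[simp] theorem shuffleProd_nil_left (q : List A × List A) : shuffleProd ([], []) q = {q} := by
  simp [shuffleProd]

theorem shuffleProd_snd_nil_nil (u v : List A) :
    shuffleProd (u, []) (v, []) = (shuffles u v).map (·, []) := by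
  simp [shuffleProd, product_singleton_right]

theorem shuffleProd_snd_cons_nil (a : A) (s t s' : List A) :
    shuffleProd (s, a :: t) (s', []) =
      (shuffleProd (s, t) (s', [])).map (Prod.map id (List.cons a)) := by
  simp [shuffleProd, product_singleton_right]

theorem shuffleProd_snd_nil_cons (b : A) (s s' t' : List A) :
    shuffleProd (s, []) (s', b :: t') =
      (shuffleProd (s, []) (s', t')).map (Prod.map id (List.cons b)) := by
  simp [shuffleProd, product_singleton_right]

theorem shuffleProd_snd_cons_cons (a b : A) (s t s' t' : List A) :
    shuffleProd (s, a :: t) (s', b :: t') =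
      (shuffleProd (s, t) (s', b :: t')).map (Prod.map id (List.cons a)) +
        (shuffleProd (s, a :: t) (s', t')).map (Prod.map id (List.cons b)) := by
  simp only [shuffleProd, shuffles_cons_cons, product_add, product_map_right]

def shuffleCuts (u v : List A) : Multiset (List A × List A) :=
  (cuts u).bind fun p => (cuts v).bind (shuffleProd p)

theorem shuffleCuts_nil_left (v : List A) : shuffleCuts [] v = cuts v := by
  simpa [shuffleCuts] using bind_singleton (cuts v) id

theorem shuffleCuts_nil_right (u : List A) : shuffleCuts u [] = cuts u := by
  simpa [shuffleCuts, shuffleProd] using bind_singleton (cuts u) id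

theorem shuffleCuts_cons_cons (a b : A) (l m : List A) :
    shuffleCuts (a :: l) (b :: m) =
      (shuffles (a :: l) (b :: m)).map (·, []) +
        (shuffleCuts l (b :: m)).map (Prod.map id (List.cons a)) +
        (shuffleCuts (a :: l) m).map (Prod.map id (List.cons b)) := by
  simp only [shuffleCuts, cuts_cons, cons_bind, bind_map, map_add, map_bind, bind_add, Prod.map,
    id, shuffleProd_snd_nil_nil, shuffleProd_snd_cons_nil, shuffleProd_snd_nil_cons,
    shuffleProd_snd_cons_cons]
  abel

theorem shuffles_bind_cuts (u v : List A) : (shuffles u v).bind cuts = shuffleCuts u v := by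
  induction u, v using shuffles.induct with
  | case1 v => rw [shuffles_nil_left, singleton_bind, shuffleCuts_nil_left]
  | case2 a l => rw [shuffles_nil_right, singleton_bind, shuffleCuts_nil_right]
  | case3 a l b m ih₁ ih₂ =>
    rw [shuffles_bind_cuts_cons_cons, shuffleCuts_cons_cons, ih₁, ih₂]

end

/-- Compatibility condition (CD1) for the shuffle Hopf algebra with the
deconcatenation coproduct (Section 5.1.3). -/
theorem stmt19 {A : Type*} (l₂ l₁ : List A) :
    (shuffles l₂ l₁).bind cuts =
      (cuts l₂).bind fun p₂ =>
        (cuts l₁).bind fun p₁ =>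
          (shuffles p₂.1 p₁.1).bind fun s =>
            (shuffles p₂.2 p₁.2).map fun t => (s, t) :=
  shuffles_bind_cuts l₂ l₁
end
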